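/- Convergence to a universal stationary Gaussian: sup_{x ∈ ℝ} |u(t,x) - φ(x)| → 0 as t → ∞, where φ(x) := (2πσ)^{-1/2} e^{-x²/(2σ)}. -/

import Mathlib

open MeasureTheory Filter


open MeasureTheory

/-- The explicit solution of the replicator-mutator equation with fitness `f(x) = -x²`. -/
noncomputable def uSol (σ : ℝ) (u₀ : ℝ → ℝ) (t x : ℝ) : ℝ :=
  (Real.sqrt (2 * Real.pi * σ * Real.tanh (2 * σ * t)))⁻¹
    * Real.exp (-(Real.tanh (2 * σ * t)) * x ^ 2 / (2 * σ))
    * (∫ y : ℝ, Real.exp (-(x / Real.cosh (2 * σ * t) - y) ^ 2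
        / (2 * σ * Real.tanh (2 * σ * t))) * u₀ y)
    / (∫ y : ℝ, Real.exp (-(Real.tanh (2 * σ * t)) * y ^ 2 / (2 * σ)) * u₀ y)

/-! Write `s = tanh (2σt) → 1` and `c = cosh (2σt) → ∞`. Then `u(t, x) = g_s(x) N(x / c) / D`,
where `g_s` is a Gaussian profile converging uniformly to `φ` as `s → 1`, and `N`, `D` are
Gaussian averages of `u₀` of widths `2σs` and `2σ/s`. Gaussian averaging is Lipschitz in the
shift and `g_s(x) |x|` is bounded uniformly in `x`, so replacing `x / c` by `0` costs `O(1/c)`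
uniformly in `x`. Both remaining averages tend to `∫ e^{-y²/(2σ)} u₀` by dominated
convergence. -/

open Real Topology

namespace Real

theorem tendsto_cosh_atTop : Tendsto cosh atTop atTop := by
  refine tendsto_atTop_mono (fun x => ?_) (tendsto_exp_atTop.atTop_div_const two_pos)
  rw [cosh_eq]
  linarith [(exp_pos (-x)).le]

theorem tendsto_tanh_atTop : Tendsto tanh atTop (𝓝 1) := by
  have hgap : ∀ x, ‖tanh x - 1‖ = exp (-x) / cosh x := fun x => by
    rw [norm_eq_abs, abs_sub_comm, abs_of_pos (sub_pos.mpr (tanh_lt_one x)), ← cosh_sub_sinh,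
      sub_div, div_self (cosh_pos x).ne', tanh_eq_sinh_div_cosh]
  rw [tendsto_iff_norm_sub_tendsto_zero]
  refine squeeze_zero' (Eventually.of_forall fun x => norm_nonneg _) ?_
    tendsto_cosh_atTop.inv_tendsto_atTop
  filter_upwards [eventually_ge_atTop 0] with x hx
  rw [hgap, div_eq_mul_inv]
  exact mul_le_of_le_one_left (inv_pos.mpr (cosh_pos x)).le (exp_le_one_iff.mpr (by linarith))

theorem tanh_pos {x : ℝ} (hx : 0 < x) : 0 < tanh x := by
  rw [tanh_eq_sinh_div_cosh]
  exact div_pos (sinh_pos_iff.mpr hx) (cosh_pos x)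

end Real

theorem abs_mul_exp_neg_sq_div_le {w : ℝ} (hw : 0 < w) (x : ℝ) :
    |x| * exp (-x ^ 2 / w) ≤ √w := by
  have hsq : √w ^ 2 = w := sq_sqrt hw.le
  have hz : |x| ≤ √w * (1 + x ^ 2 / w) := by
    have : √w * (1 + x ^ 2 / w) - |x| = ((|x| - √w / 2) ^ 2 + 3 * w / 4) / √w := by
      field_simp
      linear_combination (16 * (w + x ^ 2) - 4 * w) * hsq - 16 * w * sq_abs x
    rw [← sub_nonneg, this]
    positivity
  calc |x| * exp (-x ^ 2 / w) ≤ √w * exp (x ^ 2 / w) * exp (-x ^ 2 / w) := by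
        gcongr
        exact hz.trans (by gcongr; linarith [add_one_le_exp (x ^ 2 / w)])
    _ = √w := by rw [mul_assoc, ← exp_add, neg_div, add_neg_cancel, exp_zero, mul_one]

theorem abs_exp_neg_sq_sub_exp_neg_sq_le (p q : ℝ) :
    |exp (-p ^ 2) - exp (-q ^ 2)| ≤ |p - q| := by
  have hderiv : ∀ x : ℝ, HasDerivAt (fun z => exp (-z ^ 2)) (exp (-x ^ 2) * -(2 * x)) x :=
    fun x => by simpa using ((hasDerivAt_pow 2 x).neg).exp
  have hlip : LipschitzWith 1 (fun z : ℝ => exp (-z ^ 2)) := by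
    refine lipschitzWith_of_nnnorm_deriv_le (fun x => (hderiv x).differentiableAt) fun x => ?_
    rw [(hderiv x).deriv, ← NNReal.coe_le_coe, coe_nnnorm, NNReal.coe_one, norm_mul, norm_neg,
      norm_of_nonneg (exp_pos _).le, norm_mul, Real.norm_two, norm_eq_abs]
    have h2 : 2 * |x| ≤ exp (x ^ 2) := by
      nlinarith [add_one_le_exp (x ^ 2), sq_abs x, sq_nonneg (|x| - 1)]
    calc exp (-x ^ 2) * (2 * |x|) ≤ exp (-x ^ 2) * exp (x ^ 2) := by gcongr
      _ = 1 := by rw [← exp_add, neg_add_cancel, exp_zero]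
  simpa [dist_eq] using hlip.dist_le_mul p q

theorem exp_neg_mul_sub_exp_neg_le {s a : ℝ} (hs : 0 < s) (hs1 : s ≤ 1) :
    exp (-(s * a)) - exp (-a) ≤ (1 - s) / s := by
  have hsplit : exp (-a) = exp (-(s * a)) * exp (-((1 - s) * a)) := by
    rw [← exp_add]; ring_nf
  have htail : 1 - exp (-((1 - s) * a)) ≤ (1 - s) * a := by
    linarith [add_one_le_exp (-((1 - s) * a))]
  have hpeak : s * a * exp (-(s * a)) ≤ 1 := by
    have := add_one_le_exp (s * a)
    rw [exp_neg, ← div_eq_mul_inv, div_le_one (exp_pos _)]; linarith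
  rw [le_div_iff₀ hs, hsplit]
  nlinarith [exp_pos (-(s * a)), mul_le_mul_of_nonneg_left htail (exp_pos (-(s * a))).le]

noncomputable def gaussConv (u₀ : ℝ → ℝ) (w a : ℝ) : ℝ :=
  ∫ y, exp (-(a - y) ^ 2 / w) * u₀ y

section GaussConv

variable {u₀ : ℝ → ℝ}

theorem norm_exp_neg_sq_div_le_one {w : ℝ} (hw : 0 ≤ w) (z : ℝ) :
    ‖exp (-z ^ 2 / w)‖ ≤ 1 := by
  rw [norm_of_nonneg (exp_pos _).le, exp_le_one_iff, neg_div]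
  exact neg_nonpos.mpr (by positivity)

theorem integrable_exp_neg_sq_div_mul (hu : Integrable u₀) {w : ℝ} (hw : 0 ≤ w) (a : ℝ) :
    Integrable (fun y => exp (-(a - y) ^ 2 / w) * u₀ y) :=
  hu.bdd_mul (by fun_prop) (.of_forall fun y => norm_exp_neg_sq_div_le_one hw (a - y))

theorem abs_gaussConv_sub_le (hu : Integrable u₀) {w : ℝ} (hw : 0 < w) (a b : ℝ) :
    |gaussConv u₀ w a - gaussConv u₀ w b| ≤ |a - b| / √w * ∫ y, |u₀ y| := by
  have hscale : ∀ z, exp (-z ^ 2 / w) = exp (-(z / √w) ^ 2) := fun z => by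
    rw [div_pow, sq_sqrt hw.le, neg_div]
  have hpt : ∀ y, ‖(exp (-(a - y) ^ 2 / w) - exp (-(b - y) ^ 2 / w)) * u₀ y‖
      ≤ |a - b| / √w * |u₀ y| := fun y => by
    rw [norm_mul, norm_eq_abs, norm_eq_abs, hscale, hscale]
    gcongr
    calc _ ≤ |(a - y) / √w - (b - y) / √w| := abs_exp_neg_sq_sub_exp_neg_sq_le _ _
      _ = |a - b| / √w := by
        rw [← sub_div, abs_div, abs_of_pos (sqrt_pos.mpr hw), sub_sub_sub_cancel_right]
  rw [gaussConv, gaussConv, ← integral_sub (integrable_exp_neg_sq_div_mul hu hw.le a)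
    (integrable_exp_neg_sq_div_mul hu hw.le b), ← integral_const_mul]
  simp_rw [← sub_mul]
  exact norm_integral_le_of_norm_le (hu.abs.const_mul _) (.of_forall hpt)

theorem continuousAt_gaussConv (hu : Integrable u₀) {w : ℝ} (hw : 0 < w) (a : ℝ) :
    ContinuousAt (fun v => gaussConv u₀ v a) w := by
  refine continuousAt_of_dominated (bound := fun y => |u₀ y|) ?_ ?_ hu.abs ?_
  · exact .of_forall fun v =>
      (by fun_prop : Measurable fun y => exp (-(a - y) ^ 2 / v)).aestronglyMeasurable.mul hu.1
  · filter_upwards [eventually_gt_nhds hw] with v hv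
    refine .of_forall fun y => ?_
    rw [norm_mul, norm_eq_abs (u₀ y)]
    exact mul_le_of_le_one_left (abs_nonneg _) (norm_exp_neg_sq_div_le_one hv.le _)
  · exact .of_forall fun y => by fun_prop (disch := exact hw.ne')

theorem gaussConv_pos (hu : Integrable u₀) (hnn : ∀ y, 0 ≤ u₀ y) (hmass : 0 < ∫ y, u₀ y)
    {w : ℝ} (hw : 0 ≤ w) (a : ℝ) : 0 < gaussConv u₀ w a := by
  have hsupp :
      Function.support (fun y => exp (-(a - y) ^ 2 / w) * u₀ y) = Function.support u₀ := by
    ext y; simp [(exp_pos _).ne']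
  rw [gaussConv, integral_pos_iff_support_of_nonneg (fun y => mul_nonneg (exp_pos _).le (hnn y))
    (integrable_exp_neg_sq_div_mul hu hw a), hsupp]
  exact (integral_pos_iff_support_of_nonneg hnn hu).mp hmass

end GaussConv

noncomputable def gaussProfile (σ s x : ℝ) : ℝ :=
  (√(2 * π * σ * s))⁻¹ * exp (-s * x ^ 2 / (2 * σ))

section GaussProfile

variable {σ s : ℝ}

theorem gaussProfile_one (σ x : ℝ) :
    gaussProfile σ 1 x = (√(2 * π * σ))⁻¹ * exp (-x ^ 2 / (2 * σ)) := by
  simp [gaussProfile]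

theorem gaussProfile_nonneg (σ s x : ℝ) : 0 ≤ gaussProfile σ s x := by
  unfold gaussProfile; positivity

theorem gaussProfile_le (hσ : 0 < σ) (hs : 0 ≤ s) (x : ℝ) :
    gaussProfile σ s x ≤ (√(2 * π * σ * s))⁻¹ := by
  refine mul_le_of_le_one_right (by positivity) (exp_le_one_iff.mpr ?_)
  rw [neg_mul, neg_div]
  exact neg_nonpos.mpr (by positivity)

theorem gaussProfile_mul_abs_le (hσ : 0 < σ) (hs : 0 < s) (x : ℝ) :
    gaussProfile σ s x * |x| ≤ (√(2 * π * σ * s))⁻¹ * √(2 * σ / s) := by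
  have hrescale : exp (-s * x ^ 2 / (2 * σ)) = exp (-x ^ 2 / (2 * σ / s)) := by
    congr 1; field_simp
  rw [gaussProfile, hrescale, mul_assoc, mul_comm (exp _)]
  gcongr
  exact abs_mul_exp_neg_sq_div_le (by positivity) x

theorem abs_gaussProfile_sub_gaussProfile_one_le (hσ : 0 < σ) (hs : 0 < s) (hs1 : s ≤ 1)
    (x : ℝ) :
    |gaussProfile σ s x - gaussProfile σ 1 x|
      ≤ (√(2 * π * σ))⁻¹ * ((√s)⁻¹ - 1 + (1 - s) / s) := by
  set a := x ^ 2 / (2 * σ)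
  have hexp_s : exp (-s * x ^ 2 / (2 * σ)) = exp (-(s * a)) := by congr 1; ring
  have hexp_one : exp (-1 * x ^ 2 / (2 * σ)) = exp (-a) := by congr 1; ring
  have hsplit : gaussProfile σ s x - gaussProfile σ 1 x
      = (√(2 * π * σ))⁻¹ * ((√s)⁻¹ * exp (-(s * a)) - exp (-a)) := by
    rw [gaussProfile, gaussProfile, sqrt_mul (by positivity) s, mul_one, mul_inv, hexp_s, hexp_one]
    ring
  have hinv : 1 ≤ (√s)⁻¹ := one_le_inv₀ (sqrt_pos.mpr hs) |>.mpr (sqrt_le_one.mpr hs1)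
  have hexp_le : exp (-(s * a)) ≤ 1 :=
    exp_le_one_iff.mpr (by simp only [neg_nonpos]; positivity)
  have hexp_mono : exp (-a) ≤ exp (-(s * a)) := exp_le_exp.mpr (by
    have ha : 0 ≤ a := by positivity
    nlinarith [mul_nonneg (sub_nonneg.mpr hs1) ha])
  have hdiff := exp_neg_mul_sub_exp_neg_le (a := a) hs hs1
  rw [hsplit, abs_mul, abs_of_pos (by positivity)]
  gcongr
  rw [abs_le]
  constructor <;> nlinarith [exp_pos (-(s * a))]

end GaussProfile

theorem uSol_eq (σ : ℝ) (u₀ : ℝ → ℝ) (t x : ℝ) :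
    uSol σ u₀ t x = gaussProfile σ (tanh (2 * σ * t)) x
      * gaussConv u₀ (2 * σ * tanh (2 * σ * t)) (x / cosh (2 * σ * t))
      / gaussConv u₀ (2 * σ / tanh (2 * σ * t)) 0 := by
  rw [uSol, gaussProfile, gaussConv, gaussConv]
  congr 2
  ext y
  congr 2
  rw [div_div_eq_mul_div]
  ring

noncomputable def errorBound (σ : ℝ) (u₀ : ℝ → ℝ) (s c : ℝ) : ℝ :=
  (√(2 * π * σ * s))⁻¹ * (√(2 * σ / s) / √(2 * σ * s) * c⁻¹
      + |gaussConv u₀ (2 * σ * s) 0 - gaussConv u₀ (2 * σ) 0|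
      + |gaussConv u₀ (2 * σ / s) 0 - gaussConv u₀ (2 * σ) 0|) / gaussConv u₀ (2 * σ / s) 0
    + (√(2 * π * σ))⁻¹ * ((√s)⁻¹ - 1 + (1 - s) / s)

section ErrorBound

variable {σ : ℝ} {u₀ : ℝ → ℝ}

theorem abs_gaussProfile_mul_gaussConv_div_sub_le (hσ : 0 < σ) (hu : Integrable u₀)
    (hnn : ∀ y, 0 ≤ u₀ y) (hmass : ∫ y, u₀ y = 1) {s c : ℝ} (hs : 0 < s) (hs1 : s ≤ 1)
    (hc : 0 < c) (x : ℝ) :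
    |gaussProfile σ s x * gaussConv u₀ (2 * σ * s) (x / c) / gaussConv u₀ (2 * σ / s) 0
      - gaussProfile σ 1 x| ≤ errorBound σ u₀ s c := by
  set g := gaussProfile σ s x
  set N := gaussConv u₀ (2 * σ * s) (x / c)
  set N₀ := gaussConv u₀ (2 * σ * s) 0
  set D := gaussConv u₀ (2 * σ / s) 0
  set F := gaussConv u₀ (2 * σ) 0
  have hg : 0 ≤ g := gaussProfile_nonneg σ s x
  have hD : 0 < D := gaussConv_pos hu hnn (hmass ▸ one_pos) (by positivity) 0
  have hmass_abs : ∫ y, |u₀ y| = 1 := by simp_rw [abs_of_nonneg (hnn _)]; exact hmass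
  have hshift :
      g * |N - N₀| ≤ (√(2 * π * σ * s))⁻¹ * (√(2 * σ / s) / √(2 * σ * s) * c⁻¹) := by
    have hlip := abs_gaussConv_sub_le hu (w := 2 * σ * s) (by positivity) (x / c) 0
    rw [hmass_abs, sub_zero, abs_div, abs_of_pos hc] at hlip
    calc g * |N - N₀| ≤ g * (|x| / c / √(2 * σ * s) * 1) := by gcongr
      _ = g * |x| * ((√(2 * σ * s))⁻¹ * c⁻¹) := by ring
      _ ≤ (√(2 * π * σ * s))⁻¹ * √(2 * σ / s) * ((√(2 * σ * s))⁻¹ * c⁻¹) :=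
        mul_le_mul_of_nonneg_right (gaussProfile_mul_abs_le hσ hs x) (by positivity)
      _ = _ := by ring
  have htri : |N - D| ≤ |N - N₀| + (|N₀ - F| + |D - F|) := by
    rw [abs_sub_comm D F]
    exact (abs_sub_le N N₀ D).trans (by gcongr; exact abs_sub_le N₀ F D)
  have hnum : g * |N - D| ≤ (√(2 * π * σ * s))⁻¹ * (√(2 * σ / s) / √(2 * σ * s) * c⁻¹
      + |N₀ - F| + |D - F|) := by
    calc g * |N - D| ≤ g * |N - N₀| + g * (|N₀ - F| + |D - F|) := by
          rw [← mul_add]; gcongr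
      _ ≤ (√(2 * π * σ * s))⁻¹ * (√(2 * σ / s) / √(2 * σ * s) * c⁻¹)
          + (√(2 * π * σ * s))⁻¹ * (|N₀ - F| + |D - F|) :=
        add_le_add hshift
          (mul_le_mul_of_nonneg_right (gaussProfile_le hσ hs.le x) (by positivity))
      _ = _ := by ring
  calc |g * N / D - gaussProfile σ 1 x| = |g * (N - D) / D + (g - gaussProfile σ 1 x)| := by
        congr 1; field_simp; ring
    _ ≤ g * |N - D| / D + |g - gaussProfile σ 1 x| := by
        refine (abs_add_le _ _).trans_eq ?_
        rw [abs_div, abs_mul, abs_of_nonneg hg, abs_of_pos hD]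
    _ ≤ errorBound σ u₀ s c := by
        rw [errorBound]
        gcongr
        exact abs_gaussProfile_sub_gaussProfile_one_le hσ hs hs1 x

theorem tendsto_errorBound (hσ : 0 < σ) (hu : Integrable u₀)
    (hnn : ∀ y, 0 ≤ u₀ y) (hmass : 0 < ∫ y, u₀ y) {α : Type*} {l : Filter α} {s c : α → ℝ}
    (hs : Tendsto s l (𝓝 1)) (hc : Tendsto c l atTop) :
    Tendsto (fun i => errorBound σ u₀ (s i) (c i)) l (𝓝 0) := by
  set F := gaussConv u₀ (2 * σ) 0
  have hF : 0 < F := gaussConv_pos hu hnn hmass (by positivity) 0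
  have hcont := (continuousAt_gaussConv hu (w := 2 * σ) (by positivity) 0).tendsto
  have hN₀ : Tendsto (fun i => gaussConv u₀ (2 * σ * s i) 0) l (𝓝 F) :=
    hcont.comp (by simpa using hs.const_mul (2 * σ))
  have hD : Tendsto (fun i => gaussConv u₀ (2 * σ / s i) 0) l (𝓝 F) := by
    have hwidth : Tendsto (fun i => 2 * σ / s i) l (𝓝 (2 * σ / 1)) :=
      tendsto_const_nhds.div hs one_ne_zero
    rw [div_one] at hwidth
    exact hcont.comp hwidth
  have hK : Tendsto (fun i => (√(2 * π * σ * s i))⁻¹) l (𝓝 (√(2 * π * σ * 1))⁻¹) :=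
    ((hs.const_mul _).sqrt).inv₀ (by positivity)
  have hA : Tendsto (fun i => √(2 * σ / s i) / √(2 * σ * s i) * (c i)⁻¹) l
      (𝓝 (√(2 * σ / 1) / √(2 * σ * 1) * 0)) :=
    (((tendsto_const_nhds.div hs one_ne_zero).sqrt).div ((hs.const_mul _).sqrt)
      (by positivity)).mul (tendsto_inv_atTop_zero.comp hc)
  have hB : Tendsto (fun i => (√(s i))⁻¹ - 1 + (1 - s i) / s i) l
      (𝓝 ((√1)⁻¹ - 1 + (1 - 1) / 1)) :=
    ((hs.sqrt.inv₀ (by simp)).sub_const 1).add ((tendsto_const_nhds.sub hs).div hs one_ne_zero)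
  have hlim := ((hK.mul ((hA.add (hN₀.sub_const F).abs).add (hD.sub_const F).abs)).div hD
    hF.ne').add (hB.const_mul (√(2 * π * σ))⁻¹)
  simpa [errorBound] using hlim

end ErrorBound

theorem convergence_to_universal_stationary_gaussian_general
    (σ : ℝ) (hσ : 0 < σ) (u₀ : ℝ → ℝ)
    (hnn : ∀ x, 0 ≤ u₀ x) (hmass : ∫ y : ℝ, u₀ y = 1) :
    Tendsto (fun t => ⨆ x : ℝ,
        |uSol σ u₀ t x - (Real.sqrt (2 * Real.pi * σ))⁻¹ * Real.exp (-x ^ 2 / (2 * σ))|)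
      atTop (nhds 0) := by
  have hu : Integrable u₀ := integrable_of_integral_eq_one hmass
  have htime : Tendsto (fun t => 2 * σ * t) atTop atTop :=
    tendsto_id.const_mul_atTop (by positivity)
  refine squeeze_zero' (.of_forall fun t => Real.iSup_nonneg fun x => abs_nonneg _) ?_
    (tendsto_errorBound hσ hu hnn (hmass ▸ one_pos) (tendsto_tanh_atTop.comp htime)
      (tendsto_cosh_atTop.comp htime))
  filter_upwards [eventually_gt_atTop 0] with t ht
  refine ciSup_le fun x => ?_
  rw [uSol_eq, ← gaussProfile_one]
  exact abs_gaussProfile_mul_gaussConv_div_sub_le hσ hu hnn hmass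
    (tanh_pos (by positivity)) (tanh_lt_one _).le (cosh_pos _) x

theorem convergence_to_universal_stationary_gaussian
    (σ : ℝ) (hσ : 0 < σ) (u₀ : ℝ → ℝ) (hmeas : Measurable u₀)
    (hnn : ∀ x, 0 ≤ u₀ x) (hmass : ∫ y : ℝ, u₀ y = 1) :
    Tendsto (fun t => ⨆ x : ℝ,
        |uSol σ u₀ t x - (Real.sqrt (2 * Real.pi * σ))⁻¹ * Real.exp (-x ^ 2 / (2 * σ))|)
      atTop (nhds 0) :=
  convergence_to_universal_stationary_gaussian_general σ hσ u₀ hnn hmass
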